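/- arXiv:1710.09813 — 2 statements merged into one kernel-verified Lean document; each statement's English description precedes it below -/
import Mathlib

section
/- Let P be a row-stochastic N×N matrix with nonnegative entries, σ > 0, and P̄ its σ-thresholded version. Then for every h ≥ 0 and every row i, the number of nonzero entries in row i of P̄^h is at most min(1/σ^h, N). Consequently, P̄^h has at most min(N/σ^h, N²) nonzero entries in total. -/
theorem stmt_3 (N : ℕ) (P : Matrix (Fin N) (Fin N) ℝ) (σ : ℝ)
    (hσ : 0 < σ)
    (hnn : ∀ i l, 0 ≤ P i l)
    (hrow : ∀ i, ∑ l, P i l = 1)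
    (Pbar : Matrix (Fin N) (Fin N) ℝ)
    (hPbar : ∀ i l, Pbar i l = if σ ≤ P i l then P i l else 0) :
    (∀ (h : ℕ) (i : Fin N),
      ((Finset.univ.filter (fun l => 0 < (Pbar ^ h) i l)).card : ℝ) ≤ min (1 / σ ^ h) N) ∧
    (∀ (h : ℕ),
      ((Finset.univ.filter
        (fun p : Fin N × Fin N => 0 < (Pbar ^ h) p.1 p.2)).card : ℝ) ≤
        min (N / σ ^ h) (N ^ 2)) := by
  have hb_nn : ∀ i l, 0 ≤ Pbar i l := by
    intro i l
    rw [hPbar]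
    split
    · exact hnn i l
    · exact le_refl 0
  have hb_pos : ∀ i l, 0 < Pbar i l → σ ≤ Pbar i l := by
    intro i l hp
    by_cases hc : σ ≤ P i l
    · rw [hPbar]; simpa [hc]
    · rw [hPbar, if_neg hc] at hp; exact absurd hp (lt_irrefl 0)
  have hb_sum : ∀ i, ∑ l, Pbar i l ≤ 1 := by
    intro i
    calc ∑ l, Pbar i l ≤ ∑ l, P i l := by
          refine Finset.sum_le_sum fun l _ => ?_
          rw [hPbar]
          split
          · exact le_refl _
          · exact hnn i l
      _ = 1 := hrow i
  have hpow_nn : ∀ (h : ℕ) i l, 0 ≤ (Pbar ^ h) i l := by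
    intro h
    induction h with
    | zero =>
      intro i l
      simp [Matrix.one_apply]
      split <;> norm_num
    | succ n ih =>
      intro i l
      rw [pow_succ, Matrix.mul_apply]
      exact Finset.sum_nonneg fun k _ => mul_nonneg (ih i k) (hb_nn k l)
  have hpow_sum : ∀ (h : ℕ) i, ∑ l, (Pbar ^ h) i l ≤ 1 := by
    intro h
    induction h with
    | zero =>
      intro i
      simp [Matrix.one_apply]
    | succ n ih =>
      intro i
      calc ∑ l, (Pbar ^ (n + 1)) i l
          = ∑ l, ∑ k, (Pbar ^ n) i k * Pbar k l := by
            simp [pow_succ, Matrix.mul_apply]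
        _ = ∑ k, (Pbar ^ n) i k * ∑ l, Pbar k l := by
            rw [Finset.sum_comm]
            simp [Finset.mul_sum]
        _ ≤ ∑ k, (Pbar ^ n) i k * 1 := by
            refine Finset.sum_le_sum fun k _ => ?_
            exact mul_le_mul_of_nonneg_left (hb_sum k) (hpow_nn n i k)
        _ = ∑ k, (Pbar ^ n) i k := by simp
        _ ≤ 1 := ih i
  have hpow_pos : ∀ (h : ℕ) i l, 0 < (Pbar ^ h) i l → σ ^ h ≤ (Pbar ^ h) i l := by
    intro h
    induction h with
    | zero =>
      intro i l hp
      simp only [pow_zero, Matrix.one_apply] at hp ⊢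
      split at hp
      · split
        · exact le_refl 1
        · simp_all
      · exact absurd hp (lt_irrefl 0)
    | succ n ih =>
      intro i l hp
      rw [pow_succ, Matrix.mul_apply] at hp
      obtain ⟨k, hk⟩ : ∃ k, 0 < (Pbar ^ n) i k * Pbar k l := by
        by_contra hcon
        push_neg at hcon
        have : ∑ j, (Pbar ^ n) i j * Pbar j l ≤ 0 :=
          Finset.sum_nonpos fun j _ => hcon j
        linarith
      have hk1 : 0 < (Pbar ^ n) i k := by
        rcases lt_or_ge 0 ((Pbar ^ n) i k) with h1 | h1
        · exact h1
        · exfalso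
          have : (Pbar ^ n) i k * Pbar k l ≤ 0 :=
            mul_nonpos_of_nonpos_of_nonneg h1 (hb_nn k l)
          linarith
      have hk2 : 0 < Pbar k l := by
        rcases lt_or_ge 0 (Pbar k l) with h1 | h1
        · exact h1
        · exfalso
          have : (Pbar ^ n) i k * Pbar k l ≤ 0 :=
            mul_nonpos_of_nonneg_of_nonpos (hpow_nn n i k) h1
          linarith
      calc σ ^ (n + 1) = σ ^ n * σ := by ring
        _ ≤ (Pbar ^ n) i k * Pbar k l :=
            mul_le_mul (ih i k hk1) (hb_pos k l hk2) (le_of_lt hσ) (hpow_nn n i k)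
        _ ≤ ∑ m, (Pbar ^ n) i m * Pbar m l :=
            Finset.single_le_sum (fun m _ => mul_nonneg (hpow_nn n i m) (hb_nn m l))
              (Finset.mem_univ k)
        _ = (Pbar ^ (n + 1)) i l := by rw [pow_succ, Matrix.mul_apply]
  have key : ∀ (h : ℕ) (i : Fin N),
      ((Finset.univ.filter (fun l => 0 < (Pbar ^ h) i l)).card : ℝ) * σ ^ h ≤ 1 := by
    intro h i
    calc ((Finset.univ.filter (fun l => 0 < (Pbar ^ h) i l)).card : ℝ) * σ ^ h
        = ∑ _l ∈ Finset.univ.filter (fun l => 0 < (Pbar ^ h) i l), σ ^ h := by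
          rw [Finset.sum_const, nsmul_eq_mul]
      _ ≤ ∑ l ∈ Finset.univ.filter (fun l => 0 < (Pbar ^ h) i l), (Pbar ^ h) i l := by
          refine Finset.sum_le_sum fun l hl => ?_
          exact hpow_pos h i l (Finset.mem_filter.mp hl).2
      _ ≤ ∑ l, (Pbar ^ h) i l := by
          refine Finset.sum_le_sum_of_subset_of_nonneg (Finset.filter_subset _ _)
            fun l _ _ => hpow_nn h i l
      _ ≤ 1 := hpow_sum h i
  have part1 : ∀ (h : ℕ) (i : Fin N),
      ((Finset.univ.filter (fun l => 0 < (Pbar ^ h) i l)).card : ℝ) ≤ min (1 / σ ^ h) N := by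
    intro h i
    refine le_min ?_ ?_
    · rw [le_div_iff₀ (pow_pos hσ h)]
      exact key h i
    · exact_mod_cast (Finset.card_filter_le _ _).trans (le_of_eq (by simp))
  refine ⟨part1, ?_⟩
  intro h
  have hsplit : (Finset.univ.filter
      (fun p : Fin N × Fin N => 0 < (Pbar ^ h) p.1 p.2)).card
      = ∑ i, (Finset.univ.filter (fun l => 0 < (Pbar ^ h) i l)).card := by
    simp only [Finset.card_filter]
    rw [Fintype.sum_prod_type]
  rw [hsplit]
  push_cast
  calc ∑ i, ((Finset.univ.filter (fun l => 0 < (Pbar ^ h) i l)).card : ℝ)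
      ≤ ∑ _i : Fin N, min (1 / σ ^ h) N := Finset.sum_le_sum fun i _ => part1 h i
    _ = N * min (1 / σ ^ h) N := by
        rw [Finset.sum_const, Finset.card_univ, Fintype.card_fin, nsmul_eq_mul]
    _ ≤ min (N / σ ^ h) ((N : ℝ) ^ 2) := by
        refine le_min ?_ ?_
        · calc (N : ℝ) * min (1 / σ ^ h) N ≤ N * (1 / σ ^ h) :=
              mul_le_mul_of_nonneg_left (min_le_left _ _) (Nat.cast_nonneg N)
            _ = N / σ ^ h := by ring
        · calc (N : ℝ) * min (1 / σ ^ h) N ≤ N * N :=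
              mul_le_mul_of_nonneg_left (min_le_right _ _) (Nat.cast_nonneg N)
            _ = (N : ℝ) ^ 2 := by ring
end

section
/- Let P be a row-stochastic N×N matrix with nonnegative entries, σ > 0. Then the total number of nonzero entries in the stacked power-series tensor (P̄^0, P̄^1, ..., P̄^H) is at most ∑_{h=0}^{H} min(N/σ^h, N²), which is at most (H+1)·N·max(1/σ^H, N). -/
theorem stmt_11 (N H : ℕ) (P : Matrix (Fin N) (Fin N) ℝ) (σ : ℝ)
    (hσ : 0 < σ)
    (hnn : ∀ i l, 0 ≤ P i l)
    (hrow : ∀ i, ∑ l, P i l = 1)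
    (Pbar : Matrix (Fin N) (Fin N) ℝ)
    (hPbar : ∀ i l, Pbar i l = if σ ≤ P i l then P i l else 0) :
    (∑ h ∈ Finset.range (H + 1),
      ((Finset.univ.filter (fun p : Fin N × Fin N => 0 < (Pbar ^ h) p.1 p.2)).card : ℝ)) ≤
      ∑ h ∈ Finset.range (H + 1), min ((N : ℝ) / σ ^ h) ((N : ℝ) ^ 2) ∧
    (∑ h ∈ Finset.range (H + 1), min ((N : ℝ) / σ ^ h) ((N : ℝ) ^ 2)) ≤
      (H + 1) * N * max (1 / σ ^ H) (N : ℝ) := by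
  have hPnn : ∀ i l, 0 ≤ Pbar i l := by
    intro i l; rw [hPbar]; split_ifs with hc
    · exact hnn i l
    · exact le_refl 0
  have hPσ : ∀ i l, 0 < Pbar i l → σ ≤ Pbar i l := by
    intro i l hp; rw [hPbar] at hp ⊢
    by_cases hc : σ ≤ P i l
    · simpa [hc] using hc
    · simp [hc] at hp
  have hProw : ∀ i, ∑ l, Pbar i l ≤ 1 := by
    intro i
    calc ∑ l, Pbar i l ≤ ∑ l, P i l := by
          apply Finset.sum_le_sum; intro l _
          rw [hPbar]; split_ifs with hc
          · exact le_refl _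
          · exact hnn i l
      _ = 1 := hrow i
  -- main induction
  have key : ∀ h : ℕ, (∀ i j, 0 ≤ (Pbar ^ h) i j) ∧
      (∀ i j, 0 < (Pbar ^ h) i j → σ ^ h ≤ (Pbar ^ h) i j) ∧
      (∀ i, ∑ j, (Pbar ^ h) i j ≤ 1) := by
    intro h
    induction h with
    | zero =>
      refine ⟨?_, ?_, ?_⟩
      · intro i j; simp [Matrix.one_apply]
        split_ifs <;> norm_num
      · intro i j hp; simp [Matrix.one_apply] at hp ⊢
        split_ifs with hc
        · norm_num
        · simp [Matrix.one_apply, hc] at hp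
      · intro i
        simp [Matrix.one_apply]
    | succ n ih =>
      obtain ⟨ihnn, ihσ, ihrow⟩ := ih
      have hmul : ∀ i j, (Pbar ^ (n+1)) i j = ∑ k, (Pbar ^ n) i k * Pbar k j := by
        intro i j; rw [pow_succ, Matrix.mul_apply]
      refine ⟨?_, ?_, ?_⟩
      · intro i j; rw [hmul]
        exact Finset.sum_nonneg fun k _ => mul_nonneg (ihnn i k) (hPnn k j)
      · intro i j hp
        rw [hmul] at hp ⊢
        obtain ⟨k, -, hk⟩ : ∃ k ∈ Finset.univ, 0 < (Pbar ^ n) i k * Pbar k j := by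
          by_contra hcon
          push_neg at hcon
          have : ∑ k, (Pbar ^ n) i k * Pbar k j ≤ 0 :=
            Finset.sum_nonpos fun k hk => hcon k hk
          linarith
        have h1 : 0 < (Pbar ^ n) i k ∧ 0 < Pbar k j := by
          rcases mul_pos_iff.mp hk with h | h
          · exact h
          · exact absurd h.1 (not_lt.mpr (ihnn i k))
        have hterm : σ ^ n * σ ≤ (Pbar ^ n) i k * Pbar k j :=
          mul_le_mul (ihσ i k h1.1) (hPσ k j h1.2) (le_of_lt hσ) (ihnn i k)
        calc σ ^ (n+1) = σ ^ n * σ := by ring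
          _ ≤ (Pbar ^ n) i k * Pbar k j := hterm
          _ ≤ ∑ k, (Pbar ^ n) i k * Pbar k j :=
              Finset.single_le_sum
                (fun m _ => mul_nonneg (ihnn i m) (hPnn m j)) (Finset.mem_univ k)
      · intro i
        calc ∑ j, (Pbar ^ (n+1)) i j = ∑ j, ∑ k, (Pbar ^ n) i k * Pbar k j := by
              simp only [hmul]
          _ = ∑ k, (Pbar ^ n) i k * ∑ j, Pbar k j := by
              rw [Finset.sum_comm]; simp [Finset.mul_sum]
          _ ≤ ∑ k, (Pbar ^ n) i k * 1 :=
              Finset.sum_le_sum fun k _ =>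
                mul_le_mul_of_nonneg_left (hProw k) (ihnn i k)
          _ = ∑ k, (Pbar ^ n) i k := by simp
          _ ≤ 1 := ihrow i
  constructor
  · apply Finset.sum_le_sum
    intro h _
    obtain ⟨hnn', hσ', hrow'⟩ := key h
    set S := Finset.univ.filter (fun p : Fin N × Fin N => 0 < (Pbar ^ h) p.1 p.2) with hS
    apply le_min
    · -- card S * σ^h ≤ N
      have hσh : 0 < σ ^ h := pow_pos hσ h
      rw [le_div_iff₀ hσh]
      have h1 : (S.card : ℝ) * σ ^ h ≤ ∑ p ∈ S, (Pbar ^ h) p.1 p.2 := by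
        rw [mul_comm]
        calc σ ^ h * (S.card : ℝ) = ∑ _p ∈ S, σ ^ h := by
              rw [Finset.sum_const, nsmul_eq_mul, mul_comm]
          _ ≤ ∑ p ∈ S, (Pbar ^ h) p.1 p.2 := by
              apply Finset.sum_le_sum
              intro p hp
              rw [hS, Finset.mem_filter] at hp
              exact hσ' p.1 p.2 hp.2
      have h2 : ∑ p ∈ S, (Pbar ^ h) p.1 p.2 ≤ ∑ p : Fin N × Fin N, (Pbar ^ h) p.1 p.2 := by
        apply Finset.sum_le_sum_of_subset_of_nonneg (Finset.filter_subset _ _)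
        intro p _ _; exact hnn' p.1 p.2
      have h3 : ∑ p : Fin N × Fin N, (Pbar ^ h) p.1 p.2 ≤ (N : ℝ) := by
        rw [Fintype.sum_prod_type]
        calc ∑ i, ∑ j, (Pbar ^ h) i j ≤ ∑ _i : Fin N, (1:ℝ) :=
              Finset.sum_le_sum fun i _ => hrow' i
          _ = (N : ℝ) := by simp
      linarith
    · have : S.card ≤ N * N := by
        calc S.card ≤ (Finset.univ : Finset (Fin N × Fin N)).card :=
              Finset.card_filter_le _ _
          _ = N * N := by simp
      calc (S.card : ℝ) ≤ (N * N : ℕ) := by exact_mod_cast this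
        _ = (N : ℝ) ^ 2 := by push_cast; ring
  · calc ∑ h ∈ Finset.range (H + 1), min ((N : ℝ) / σ ^ h) ((N : ℝ) ^ 2)
        ≤ ∑ _h ∈ Finset.range (H + 1), (N : ℝ) ^ 2 :=
          Finset.sum_le_sum fun h _ => min_le_right _ _
      _ = (H + 1) * (N : ℝ) ^ 2 := by
          rw [Finset.sum_const, Finset.card_range]; push_cast; ring
      _ ≤ (H + 1) * N * max (1 / σ ^ H) (N : ℝ) := by
          have h1 : (N : ℝ) ≤ max (1 / σ ^ H) (N : ℝ) := le_max_right _ _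
          have h2 : (0:ℝ) ≤ (H + 1) * N := by positivity
          calc (H + 1) * (N : ℝ) ^ 2 = (H + 1) * N * N := by ring
            _ ≤ (H + 1) * N * max (1 / σ ^ H) (N : ℝ) :=
                mul_le_mul_of_nonneg_left h1 h2
end
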